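/- (Matrix S-lemma) Let H ∈ S^{p×p} and Q ∈ S^{n×n} be real symmetric matrices with p ≤ n. The set {X ∈ ℝ^{n×p} : tr(HXᵀQX) < 0, XᵀX = I_p} is empty if and only if there exist M ∈ S^{p×p} and W ∈ S^{n×n} with W ⪰ 0 such that tr(HXᵀQX) + tr(M(XᵀX − I_p)) + tr(W(XXᵀ − I_n)) ≥ 0 for all X ∈ ℝ^{n×p}. -/

import Mathlib

/-!
Diagonalize `Q = U diag(λ) Uᵀ` and `H = V diag(μ) Vᵀ` by orthogonal matrices. The substitution
`X = U Y Vᵀ` preserves both the constraint `XᵀX = I` and the shape of the Lagrangian, so the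
problem becomes one about the eigenvalues `λ` and `μ`. Partial permutation
matrices lie on the Stiefel manifold, so emptiness of the set gives `∑ⱼ μⱼ λ_{σ j} ≥ 0` for
every injection `σ`. By duality for this assignment problem there are `m` and `w ≥ 0` with
`λᵢ μⱼ + mⱼ + wᵢ ≥ 0` and `∑ m + ∑ w ≤ 0`; then `M = V diag(m) Vᵀ`, `W = U diag(w) Uᵀ` is the
certificate, because the diagonal Lagrangian is `∑ᵢⱼ (λᵢ μⱼ + mⱼ + wᵢ) Yᵢⱼ² - ∑ m - ∑ w`.
Conversely, on the Stiefel manifold the `M`-term vanishes and `I - XXᵀ` is a projection, so the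
`W`-term is `-tr((I - XXᵀ) W (I - XXᵀ)) ≤ 0`.
-/

open Matrix Finset

noncomputable def stieltjesSum (a b : ℕ → ℝ) (t : ℕ) : ℝ :=
  ∑ l ∈ range t, (a (l + 1) - a l) * b l

lemma stieltjesSum_sub_stieltjesSum (a b : ℕ → ℝ) {s t : ℕ} (h : s ≤ t) :
    stieltjesSum a b t - stieltjesSum a b s = ∑ l ∈ Ico s t, (a (l + 1) - a l) * b l :=
  (sum_Ico_eq_sub _ h).symm

lemma stieltjesSum_sub_le {a b : ℕ → ℝ} (ha : Antitone a) (hb : Monotone b) (s t : ℕ) :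
    stieltjesSum a b t - stieltjesSum a b s ≤ (a t - a s) * b s := by
  have hstep (l : ℕ) : a (l + 1) - a l ≤ 0 := sub_nonpos.mpr (ha l.le_succ)
  rcases le_total s t with hst | hts
  · calc stieltjesSum a b t - stieltjesSum a b s
        = ∑ l ∈ Ico s t, (a (l + 1) - a l) * b l := stieltjesSum_sub_stieltjesSum a b hst
      _ ≤ ∑ l ∈ Ico s t, (a (l + 1) - a l) * b s := sum_le_sum fun l hl =>
          mul_le_mul_of_nonpos_left (hb (mem_Ico.mp hl).1) (hstep l)
      _ = (a t - a s) * b s := by rw [← sum_mul, sum_Ico_sub _ hst]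
  · have : (a s - a t) * b s ≤ stieltjesSum a b s - stieltjesSum a b t :=
      calc (a s - a t) * b s = ∑ l ∈ Ico t s, (a (l + 1) - a l) * b s := by
            rw [← sum_mul, sum_Ico_sub _ hts]
        _ ≤ ∑ l ∈ Ico t s, (a (l + 1) - a l) * b l := sum_le_sum fun l hl =>
            mul_le_mul_of_nonpos_left (hb (mem_Ico.mp hl).2.le) (hstep l)
        _ = stieltjesSum a b s - stieltjesSum a b t :=
            (stieltjesSum_sub_stieltjesSum a b hts).symm
    linarith

lemma Fin.clamp_val_self {k : ℕ} (s : Fin (k + 1)) : Fin.clamp s k = s :=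
  Fin.ext (min_eq_left (Fin.is_le s))

/-- By rearrangement the identity is an optimal assignment for the cost `a t * b s`, and the
Stieltjes sums `z t = ∑_{l<t} b l (a (l+1) - a l)` are a dual potential for it. -/
lemma exists_dual_of_antitone_of_monotone {n : ℕ} {a b : Fin n → ℝ} (ha : Antitone a)
    (hb : Monotone b) :
    ∃ u v : Fin n → ℝ, (∀ t, 0 ≤ u t) ∧ (∀ t s, 0 ≤ a t * b s + u t + v s) ∧
      (∀ s, b s = 0 → v s = 0) ∧ ∑ t, u t + ∑ s, v s = -∑ s, a s * b s := by
  cases n with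
  | zero => exact ⟨0, 0, fun t => t.elim0, fun t => t.elim0, fun s => s.elim0, by simp⟩
  | succ k =>
    set z : Fin (k + 1) → ℝ := fun s =>
      stieltjesSum (a ∘ (Fin.clamp · k)) (b ∘ (Fin.clamp · k)) s
    have hz (s t : Fin (k + 1)) : z t - z s ≤ (a t - a s) * b s := by
      simpa only [z, Function.comp_apply, Fin.clamp_val_self] using stieltjesSum_sub_le
        (ha.comp_monotone Fin.clamp_monotone) (hb.comp Fin.clamp_monotone) s t
    obtain ⟨s₀, -, hs₀⟩ := exists_max_image univ z univ_nonempty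
    refine ⟨fun t => z s₀ - z t, fun s => z s - z s₀ - a s * b s,
      fun t => sub_nonneg.mpr (hs₀ t (mem_univ t)), fun t s => by linarith [hz s t],
      fun s hs => ?_, ?_⟩
    · have hle := hs₀ s (mem_univ s)
      have hge := hz s s₀
      simp only [hs, mul_zero] at hge ⊢
      linarith
    · rw [← sum_add_distrib, ← sum_neg_distrib]
      exact sum_congr rfl fun _ _ => by ring

/-- Pad `μ` with zeros to length `n` and sort both sequences. -/
lemma exists_assignment_dual {n p : ℕ} (hp : p ≤ n) (lam : Fin n → ℝ) (mu : Fin p → ℝ)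
    (h : ∀ σ : Fin p ↪ Fin n, 0 ≤ ∑ j, mu j * lam (σ j)) :
    ∃ (m : Fin p → ℝ) (w : Fin n → ℝ), (∀ i, 0 ≤ w i) ∧
      (∀ i j, 0 ≤ lam i * mu j + m j + w i) ∧ ∑ j, m j + ∑ i, w i ≤ 0 := by
  have hι := Fin.castLE_injective hp
  set μ' : Fin n → ℝ := Function.extend (Fin.castLE hp) mu 0
  have hμ' (j : Fin p) : μ' (Fin.castLE hp j) = mu j := hι.extend_apply _ _ _
  obtain ⟨ρ, hρ⟩ : ∃ ρ : Equiv.Perm (Fin n), Antitone (lam ∘ ρ) :=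
    ⟨_, fun s t hst => neg_le_neg_iff.mp (Tuple.monotone_sort (-lam) hst)⟩
  obtain ⟨τ, hτ⟩ : ∃ τ : Equiv.Perm (Fin n), Monotone (μ' ∘ τ) := ⟨_, Tuple.monotone_sort μ'⟩
  obtain ⟨u, v, hu, hfeas, hv, hsum⟩ := exists_dual_of_antitone_of_monotone hρ hτ
  have hreindex (F : Fin n → ℝ) (hF : ∀ s, μ' (τ s) = 0 → F s = 0) :
      ∑ j, F (τ.symm (Fin.castLE hp j)) = ∑ s, F s := by
    rw [← Equiv.sum_comp τ.symm F]
    refine Fintype.sum_of_injective _ hι _ _ (fun i hi => hF _ ?_) fun _ => rfl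
    rw [Equiv.apply_symm_apply]
    exact Function.extend_apply' _ _ _ hi
  refine ⟨fun j => v (τ.symm (Fin.castLE hp j)), fun i => u (ρ.symm i), fun i => hu _,
    fun i j => by
      simpa [hμ', add_right_comm] using hfeas (ρ.symm i) (τ.symm (Fin.castLE hp j)), ?_⟩
  have hcost : ∑ s, (lam ∘ ρ) s * (μ' ∘ τ) s =
      ∑ j, mu j * lam (ρ (τ.symm (Fin.castLE hp j))) := by
    rw [← hreindex _ fun s hs => by simp only [Function.comp_apply, hs, mul_zero]]
    simp [hμ', mul_comm]
  rw [hreindex v hv, Equiv.sum_comp ρ.symm u, add_comm, hsum, neg_nonpos, hcost]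
  exact h ((Fin.castLEEmb hp).trans (τ.symm.toEmbedding.trans ρ.toEmbedding))

section Lagrangian

variable {ι κ : Type*}

def lagrangian [Fintype ι] [DecidableEq ι] [Fintype κ] [DecidableEq κ] (H : Matrix κ κ ℝ)
    (Q : Matrix ι ι ℝ) (M : Matrix κ κ ℝ) (W : Matrix ι ι ℝ) (X : Matrix ι κ ℝ) : ℝ :=
  (H * Xᵀ * Q * X).trace + (M * (Xᵀ * X - 1)).trace + (W * (X * Xᵀ - 1)).trace

lemma Matrix.IsHermitian.exists_orthogonal_diagonal [Fintype ι] [DecidableEq ι]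
    {A : Matrix ι ι ℝ} (hA : A.IsHermitian) :
    ∃ U : Matrix ι ι ℝ, Uᵀ * U = 1 ∧ A = U * diagonal hA.eigenvalues * Uᵀ := by
  refine ⟨hA.eigenvectorUnitary, ?_, ?_⟩
  · simpa [star_eq_conjTranspose, conjTranspose_eq_transpose_of_trivial] using
      mem_unitaryGroup_iff'.mp hA.eigenvectorUnitary.2
  · simpa [star_eq_conjTranspose, conjTranspose_eq_transpose_of_trivial] using
      hA.spectral_theorem

lemma trace_conj_of_transpose_mul_self [Fintype κ] [DecidableEq κ] {V : Matrix κ κ ℝ}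
    (hV : Vᵀ * V = 1) (N : Matrix κ κ ℝ) : (V * N * Vᵀ).trace = N.trace := by
  rw [trace_mul_comm, ← Matrix.mul_assoc, hV, Matrix.one_mul]

lemma trace_conj_mul_transpose_mul_conj_mul [Fintype ι] [DecidableEq ι] [Fintype κ]
    [DecidableEq κ] {U : Matrix ι ι ℝ} {V : Matrix κ κ ℝ} (hU : Uᵀ * U = 1) (hV : Vᵀ * V = 1)
    (A : Matrix κ κ ℝ) (B : Matrix ι ι ℝ) (Y : Matrix ι κ ℝ) :
    (V * A * Vᵀ * (U * Y * Vᵀ)ᵀ * (U * B * Uᵀ) * (U * Y * Vᵀ)).trace =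
      (A * Yᵀ * B * Y).trace := by
  have hU' (N : Matrix ι κ ℝ) : Uᵀ * (U * N) = N := by
    rw [← Matrix.mul_assoc, hU, Matrix.one_mul]
  have hV' (N : Matrix κ κ ℝ) : Vᵀ * (V * N) = N := by
    rw [← Matrix.mul_assoc, hV, Matrix.one_mul]
  simp only [transpose_mul, transpose_transpose, Matrix.mul_assoc, hU', hV']
  rw [trace_mul_comm]
  simp only [Matrix.mul_assoc, hV, Matrix.mul_one]

lemma transpose_mul_self_of_orthogonal_left [Fintype ι] [DecidableEq ι] [Fintype κ]
    {U : Matrix ι ι ℝ} (hU : Uᵀ * U = 1) (V : Matrix κ κ ℝ) (Y : Matrix ι κ ℝ) :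
    (U * Y * Vᵀ)ᵀ * (U * Y * Vᵀ) = V * (Yᵀ * Y) * Vᵀ := by
  simp only [transpose_mul, transpose_transpose, Matrix.mul_assoc]
  rw [← Matrix.mul_assoc Uᵀ, hU, Matrix.one_mul]

lemma mul_transpose_self_of_orthogonal_right [Fintype ι] [Fintype κ] [DecidableEq κ]
    (U : Matrix ι ι ℝ) {V : Matrix κ κ ℝ} (hV : Vᵀ * V = 1) (Y : Matrix ι κ ℝ) :
    (U * Y * Vᵀ) * (U * Y * Vᵀ)ᵀ = U * (Y * Yᵀ) * Uᵀ := by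
  simp only [transpose_mul, transpose_transpose, Matrix.mul_assoc]
  rw [← Matrix.mul_assoc Vᵀ, hV, Matrix.one_mul]

lemma trace_conj_mul_conj_sub_one [Fintype κ] [DecidableEq κ] {V : Matrix κ κ ℝ}
    (hV : Vᵀ * V = 1) (A B : Matrix κ κ ℝ) :
    (V * A * Vᵀ * (V * B * Vᵀ - 1)).trace = (A * (B - 1)).trace := by
  have hV' : V * Vᵀ = 1 := mul_eq_one_comm.mp hV
  have : V * A * Vᵀ * (V * B * Vᵀ - 1) = V * (A * (B - 1)) * Vᵀ := by
    simp only [Matrix.mul_sub, Matrix.sub_mul, Matrix.mul_one, Matrix.mul_assoc]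
    rw [← Matrix.mul_assoc Vᵀ V, hV, Matrix.one_mul]
  rw [this, trace_conj_of_transpose_mul_self hV]

lemma lagrangian_conj [Fintype ι] [DecidableEq ι] [Fintype κ] [DecidableEq κ]
    {U : Matrix ι ι ℝ} {V : Matrix κ κ ℝ} (hU : Uᵀ * U = 1) (hV : Vᵀ * V = 1)
    (H M : Matrix κ κ ℝ) (Q W : Matrix ι ι ℝ) (Y : Matrix ι κ ℝ) :
    lagrangian (V * H * Vᵀ) (U * Q * Uᵀ) (V * M * Vᵀ) (U * W * Uᵀ) (U * Y * Vᵀ) =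
      lagrangian H Q M W Y := by
  rw [lagrangian, lagrangian, trace_conj_mul_transpose_mul_conj_mul hU hV,
    transpose_mul_self_of_orthogonal_left hU, mul_transpose_self_of_orthogonal_right U hV,
    trace_conj_mul_conj_sub_one hV, trace_conj_mul_conj_sub_one hU]

lemma lagrangian_diagonal [Fintype ι] [DecidableEq ι] [Fintype κ] [DecidableEq κ]
    (lam w : ι → ℝ) (mu m : κ → ℝ) (Y : Matrix ι κ ℝ) :
    lagrangian (diagonal mu) (diagonal lam) (diagonal m) (diagonal w) Y =
      ∑ i, ∑ j, (lam i * mu j + m j + w i) * Y i j ^ 2 - (∑ j, m j + ∑ i, w i) := by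
  have hobj : (diagonal mu * Yᵀ * diagonal lam * Y).trace =
      ∑ i, ∑ j, lam i * mu j * Y i j ^ 2 := by
    simp only [trace, diag_apply, mul_apply, diagonal_apply, transpose_apply, ite_mul, zero_mul,
      sum_ite_eq, mem_univ, ↓reduceIte, mul_ite, mul_zero, sum_ite_eq']
    rw [sum_comm]
    exact sum_congr rfl fun _ _ => sum_congr rfl fun _ _ => by ring
  have hM : (diagonal m * (Yᵀ * Y - 1)).trace = ∑ i, ∑ j, m j * Y i j ^ 2 - ∑ j, m j := by
    simp [trace, mul_apply, diagonal_apply, Finset.mul_sum, Matrix.mul_sub, ite_mul, sq]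
    rw [sum_comm]
  have hW : (diagonal w * (Y * Yᵀ - 1)).trace = ∑ i, ∑ j, w i * Y i j ^ 2 - ∑ i, w i := by
    simp [trace, mul_apply, diagonal_apply, Finset.mul_sum, Matrix.mul_sub, ite_mul, sq]
  rw [lagrangian, hobj, hM, hW]
  simp only [add_mul, sum_add_distrib]
  ring

lemma lagrangian_conj_diagonal_nonneg [Fintype ι] [DecidableEq ι] [Fintype κ] [DecidableEq κ]
    {U : Matrix ι ι ℝ} {V : Matrix κ κ ℝ} (hU : Uᵀ * U = 1) (hV : Vᵀ * V = 1)
    {lam w : ι → ℝ} {mu m : κ → ℝ} (hfeas : ∀ i j, 0 ≤ lam i * mu j + m j + w i)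
    (hsum : ∑ j, m j + ∑ i, w i ≤ 0) (X : Matrix ι κ ℝ) :
    0 ≤ lagrangian (V * diagonal mu * Vᵀ) (U * diagonal lam * Uᵀ) (V * diagonal m * Vᵀ)
      (U * diagonal w * Uᵀ) X := by
  have hX : X = U * (Uᵀ * X * V) * Vᵀ := by
    simp only [Matrix.mul_assoc, mul_eq_one_comm.mp hV, Matrix.mul_one]
    rw [← Matrix.mul_assoc, mul_eq_one_comm.mp hU, Matrix.one_mul]
  rw [hX, lagrangian_conj hU hV, lagrangian_diagonal, sub_nonneg]
  exact hsum.trans (sum_nonneg fun i _ => sum_nonneg fun j _ =>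
    mul_nonneg (hfeas i j) (sq_nonneg _))

lemma submatrix_one_transpose_mul_mul_submatrix_one [Fintype ι] [DecidableEq ι] (σ : κ → ι)
    (D : Matrix ι ι ℝ) :
    ((1 : Matrix ι ι ℝ).submatrix id σ)ᵀ * D * (1 : Matrix ι ι ℝ).submatrix id σ =
      D.submatrix σ σ := by
  rw [transpose_submatrix, transpose_one, ← submatrix_id_id D,
    ← submatrix_mul _ _ _ _ _ Function.bijective_id,
    ← submatrix_mul _ _ _ _ _ Function.bijective_id]
  simp

lemma exists_orthonormal_trace_eq_sum [Fintype ι] [DecidableEq ι] [Fintype κ] [DecidableEq κ]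
    {U : Matrix ι ι ℝ} {V : Matrix κ κ ℝ} (hU : Uᵀ * U = 1) (hV : Vᵀ * V = 1)
    (lam : ι → ℝ) (mu : κ → ℝ) (σ : κ ↪ ι) :
    ∃ X : Matrix ι κ ℝ, Xᵀ * X = 1 ∧
      (V * diagonal mu * Vᵀ * Xᵀ * (U * diagonal lam * Uᵀ) * X).trace =
        ∑ j, mu j * lam (σ j) := by
  set P := (1 : Matrix ι ι ℝ).submatrix id σ
  have hP (D : Matrix ι ι ℝ) : Pᵀ * D * P = D.submatrix σ σ :=
    submatrix_one_transpose_mul_mul_submatrix_one σ D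
  refine ⟨U * P * Vᵀ, ?_, ?_⟩
  · have hPP : Pᵀ * P = 1 := by
      simpa using hP 1
    rw [transpose_mul_self_of_orthogonal_left hU, hPP, Matrix.mul_one, mul_eq_one_comm.mp hV]
  · rw [trace_conj_mul_transpose_mul_conj_mul hU hV, Matrix.mul_assoc (diagonal mu) Pᵀ,
      Matrix.mul_assoc (diagonal mu), hP, submatrix_diagonal_embedding, diagonal_mul_diagonal,
      trace_diagonal]
    rfl

lemma Matrix.PosSemidef.trace_mul_mul_transpose_sub_one_nonpos [Fintype ι] [DecidableEq ι]
    [Fintype κ] [DecidableEq κ] {W : Matrix ι ι ℝ} (hW : W.PosSemidef) {X : Matrix ι κ ℝ}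
    (hX : Xᵀ * X = 1) : (W * (X * Xᵀ - 1)).trace ≤ 0 := by
  set P := 1 - X * Xᵀ
  have hPt : Pᴴ = P := by simp [P, conjTranspose_eq_transpose_of_trivial, transpose_sub]
  have hPP : P * P = P := by
    simp only [P, Matrix.mul_sub, Matrix.sub_mul, Matrix.mul_one, Matrix.one_mul,
      Matrix.mul_assoc]
    rw [← Matrix.mul_assoc Xᵀ, hX, Matrix.one_mul, sub_self, sub_zero]
  have : (W * (X * Xᵀ - 1)).trace = -(Pᴴ * W * P).trace := by
    rw [hPt, ← trace_mul_cycle, Matrix.mul_assoc, hPP, ← neg_sub, Matrix.mul_neg, trace_neg]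
  rw [this, neg_nonpos]
  exact (hW.conjTranspose_mul_mul_same P).trace_nonneg

end Lagrangian

theorem stmt_5 {n p : ℕ} (hp : p ≤ n) (H : Matrix (Fin p) (Fin p) ℝ)
    (Q : Matrix (Fin n) (Fin n) ℝ) (hH : H.IsHermitian) (hQ : Q.IsHermitian) :
    (¬ ∃ X : Matrix (Fin n) (Fin p) ℝ, (H * Xᵀ * Q * X).trace < 0 ∧ Xᵀ * X = 1) ↔
      ∃ (M : Matrix (Fin p) (Fin p) ℝ) (W : Matrix (Fin n) (Fin n) ℝ),
        M.IsHermitian ∧ W.PosSemidef ∧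
        ∀ X : Matrix (Fin n) (Fin p) ℝ,
          0 ≤ (H * Xᵀ * Q * X).trace + (M * (Xᵀ * X - 1)).trace +
              (W * (X * Xᵀ - 1)).trace := by
  obtain ⟨U, hU, hQU⟩ := hQ.exists_orthogonal_diagonal
  obtain ⟨V, hV, hHV⟩ := hH.exists_orthogonal_diagonal
  constructor
  · intro hempty
    obtain ⟨m, w, hw, hfeas, hsum⟩ := exists_assignment_dual hp hQ.eigenvalues hH.eigenvalues
      fun σ => by
        obtain ⟨X, hX, htr⟩ :=
          exists_orthonormal_trace_eq_sum hU hV hQ.eigenvalues hH.eigenvalues σ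
        rw [← htr, ← hQU, ← hHV]
        exact not_lt.mp fun hlt => hempty ⟨X, hlt, hX⟩
    refine ⟨V * diagonal m * Vᵀ, U * diagonal w * Uᵀ, ?_, ?_, fun X => ?_⟩
    · simpa [conjTranspose_eq_transpose_of_trivial] using
        isHermitian_mul_mul_conjTranspose V (isHermitian_diagonal m)
    · simpa [conjTranspose_eq_transpose_of_trivial] using
        (PosSemidef.diagonal (d := w) hw).mul_mul_conjTranspose_same U
    · rw [hHV, hQU]
      exact lagrangian_conj_diagonal_nonneg hU hV hfeas hsum X
  · rintro ⟨M, W, -, hW, hL⟩ ⟨X, hlt, hX⟩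
    have hLX := hL X
    rw [hX, sub_self, Matrix.mul_zero, trace_zero, add_zero] at hLX
    linarith [hW.trace_mul_mul_transpose_sub_one_nonpos hX]
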